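/- Let G be a simplicial group, X a simplicial set, τ a twisting function for G over X, W̄G the classifying space with universal twisting τ̄(g_{n-1},…,g_0) = g_{n-1}, WG = G ×_{τ̄} W̄G the universal bundle, and f_τ : X → W̄G the simplicial map associated to τ. Then the twisted Cartesian product G ×_τ X is the pullback of WG along f_τ: the map (g, x) ↦ ((g, f_τ(x)), x) is an isomorphism of simplicial sets from G ×_τ X onto the fiber product {(w, x) ∈ WG_n × X_n : π(w) = f_τ(x)} (with componentwise face and degeneracy maps), compatible with the G-actions and projections. -/

import Mathlib

/-- The underlying family of groups of a simplicial group. -/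
structure PreSimplicialGroup where
  G : ℕ → Type
  grp : ∀ n, Group (G n)

attribute [instance] PreSimplicialGroup.grp

/-- A simplicial group: a family of groups `G n` together with face homomorphisms
`d n i : G (n+1) →* G n` (for `i ≤ n+1`) and degeneracy homomorphisms
`s n i : G n →* G (n+1)` (for `i ≤ n`) satisfying the simplicial identities. -/
structure SimplicialGroup extends PreSimplicialGroup where
  d : ∀ n : ℕ, ℕ → (G (n+1) →* G n)
  s : ∀ n : ℕ, ℕ → (G n →* G (n+1))
  dd : ∀ (n i j : ℕ), i ≤ j → j ≤ n + 1 →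
    (d n i).comp (d (n+1) (j+1)) = (d n j).comp (d (n+1) i)
  ss : ∀ (n i j : ℕ), i ≤ j → j ≤ n →
    (s (n+1) i).comp (s n j) = (s (n+1) (j+1)).comp (s n i)
  ds_lt : ∀ (n i j : ℕ), i ≤ j → j ≤ n →
    (d (n+1) i).comp (s (n+1) (j+1)) = (s n j).comp (d n i)
  ds_self : ∀ (n j : ℕ), j ≤ n → (d n j).comp (s n j) = MonoidHom.id (G n)
  ds_succ : ∀ (n j : ℕ), j ≤ n → (d n (j+1)).comp (s n j) = MonoidHom.id (G n)
  ds_gt : ∀ (n i j : ℕ), j < i → i ≤ n + 1 →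
    (d (n+1) (i+1)).comp (s (n+1) j) = (s n j).comp (d n i)

/-- The Moore complex: `N X n = ⋂_{i=1}^{n} ker ∂ᵢ` as a subgroup of `X.G n`,
with `N X 0 = X.G 0`. -/
def SimplicialGroup.N (X : SimplicialGroup) : (n : ℕ) → Subgroup (X.G n)
  | 0 => ⊤
  | (n+1) => ⨅ i ∈ Finset.Icc 1 (n+1), (X.d n i).ker

/-- A simplicial set: a family of types `X n` with face maps `d n i : X (n+1) → X n`
(for `i ≤ n+1`) and degeneracy maps `s n i : X n → X (n+1)` (for `i ≤ n`)
satisfying the simplicial identities. -/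
structure SSet' where
  X : ℕ → Type
  d : ∀ n : ℕ, ℕ → X (n+1) → X n
  s : ∀ n : ℕ, ℕ → X n → X (n+1)
  dd : ∀ (n i j : ℕ), i ≤ j → j ≤ n + 1 → ∀ x : X (n+2),
    d n i (d (n+1) (j+1) x) = d n j (d (n+1) i x)
  ss : ∀ (n i j : ℕ), i ≤ j → j ≤ n → ∀ x : X n,
    s (n+1) i (s n j x) = s (n+1) (j+1) (s n i x)
  ds_lt : ∀ (n i j : ℕ), i ≤ j → j ≤ n → ∀ x : X (n+1),
    d (n+1) i (s (n+1) (j+1) x) = s n j (d n i x)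
  ds_self : ∀ (n j : ℕ), j ≤ n → ∀ x : X n, d n j (s n j x) = x
  ds_succ : ∀ (n j : ℕ), j ≤ n → ∀ x : X n, d n (j+1) (s n j x) = x
  ds_gt : ∀ (n i j : ℕ), j < i → i ≤ n + 1 → ∀ x : X (n+1),
    d (n+1) (i+1) (s (n+1) j x) = s n j (d n i x)

/-- `τ` is a twisting function for the simplicial group `G` over the simplicial data
`(Y, dY, sY)`: `τ n : Y (n+1) → G n` satisfies
`∂₀τ(x)·τ(∂₀x) = τ(∂₁x)`, `∂ᵢτ(x) = τ(∂_{i+1}x)` for `i > 0`,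
`sᵢτ(x) = τ(s_{i+1}x)` for `i ≥ 0`, and `τ(s₀x) = e`. -/
def IsTwistingData (G : SimplicialGroup) (Y : ℕ → Type)
    (dY : ∀ n : ℕ, ℕ → Y (n+1) → Y n) (sY : ∀ n : ℕ, ℕ → Y n → Y (n+1))
    (τ : ∀ n, Y (n+1) → G.G n) : Prop :=
  (∀ (n : ℕ) (x : Y (n+2)),
      G.d n 0 (τ (n+1) x) * τ n (dY (n+1) 0 x) = τ n (dY (n+1) 1 x)) ∧
  (∀ (n i : ℕ), i ≤ n → ∀ x : Y (n+2),
      G.d n (i+1) (τ (n+1) x) = τ n (dY (n+1) (i+2) x)) ∧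
  (∀ (n i : ℕ), i ≤ n → ∀ x : Y (n+1),
      G.s n i (τ n x) = τ (n+1) (sY (n+1) (i+1) x)) ∧
  (∀ (n : ℕ) (x : Y n), τ n (sY n 0 x) = 1)

/-- Face maps of the twisted Cartesian product `G ×_τ Y`:
`∂ᵢ(g,x) = (∂ᵢg, ∂ᵢx)` for `i > 0` and `∂₀(g,x) = (∂₀g · τ(x), ∂₀x)`. -/
def TPd (G : SimplicialGroup) (Y : ℕ → Type) (dY : ∀ n : ℕ, ℕ → Y (n+1) → Y n)
    (τ : ∀ n, Y (n+1) → G.G n) (n : ℕ) :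
    ℕ → G.G (n+1) × Y (n+1) → G.G n × Y n
  | 0, p => (G.d n 0 p.1 * τ n p.2, dY n 0 p.2)
  | (k+1), p => (G.d n (k+1) p.1, dY n (k+1) p.2)

/-- Degeneracy maps of the twisted Cartesian product: `sᵢ(g,x) = (sᵢg, sᵢx)`. -/
def TPs (G : SimplicialGroup) (Y : ℕ → Type) (sY : ∀ n : ℕ, ℕ → Y n → Y (n+1))
    (n k : ℕ) (p : G.G n × Y n) : G.G (n+1) × Y (n+1) :=
  (G.s n k p.1, sY n k p.2)

/-- The `n`-simplices of the classifying space `W̄G`: tuples `(g_{n-1}, …, g_0)` with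
`g_j ∈ G_j`, encoded as dependent functions (`W̄G_0` is a one-element type). -/
def WbarObj (G : SimplicialGroup) (n : ℕ) : Type := ∀ j : Fin n, G.G j.val

/-- Face maps of `W̄G`: `∂₀(g_n,…,g_0) = (g_{n-1},…,g_0)` and
`∂_{i+1}(g_n,…,g_0) = (∂ᵢg_n, …, ∂₁g_{n-i+1}, ∂₀g_{n-i}·g_{n-i-1}, g_{n-i-2}, …, g_0)`
(the last face being `∂_{n+1}(g_n,…,g_0) = (∂_ng_n,…,∂₁g_1)`), written componentwise. -/
def Wd (G : SimplicialGroup) (n k : ℕ) (w : WbarObj G (n+1)) : WbarObj G n :=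
  fun j =>
    if h1 : j.val + k < n then w ⟨j.val, by omega⟩
    else if h2 : j.val + k = n then
      G.d j.val 0 (w ⟨j.val + 1, by have := j.isLt; omega⟩) * w ⟨j.val, by have := j.isLt; omega⟩
    else G.d j.val (j.val + k - n) (w ⟨j.val + 1, by have := j.isLt; omega⟩)

/-- Degeneracy maps of `W̄G`: `s₀(g_{n-1},…,g_0) = (e_n, g_{n-1},…,g_0)` and
`s_{i+1}(g_{n-1},…,g_0) = (sᵢg_{n-1}, …, s₀g_{n-i-1}, e_{n-i-1}, g_{n-i-2}, …, g_0)`,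
written componentwise. -/
def Ws (G : SimplicialGroup) (n k : ℕ) (w : WbarObj G n) : WbarObj G (n+1) :=
  fun j =>
    if h1 : j.val + k < n then w ⟨j.val, by omega⟩
    else if h2 : j.val + k = n then 1
    else
      match j with
      | ⟨0, _⟩ => 1
      | ⟨m+1, hm⟩ => if h : m < n then G.s m (m + 1 + k - n - 1) (w ⟨m, h⟩) else 1

/-- The universal twisting `τ̄(g_{n-1},…,g_0) = g_{n-1}` on `W̄G`. -/
def Wtau (G : SimplicialGroup) (n : ℕ) (w : WbarObj G (n+1)) : G.G n :=
  w ⟨n, Nat.lt_succ_self n⟩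

/-- The iterated zeroth face map `∂₀^r : X_{n+r} → X_n`. -/
def d0iter (Y : SSet') : (r n : ℕ) → Y.X (n + r) → Y.X n
  | 0, _, x => x
  | (r+1), n, x => d0iter Y r n (Y.d (n + r) 0 x)

/-- The simplicial map `f_τ : X → W̄G` associated to a twisting `τ`:
`f_τ(x) = (τ(x), τ(∂₀x), …, τ(∂₀^{n-1}x))` for `x ∈ X_n`. -/
def fTau (G : SimplicialGroup) (Y : SSet') (τ : ∀ n, Y.X (n+1) → G.G n) (n : ℕ)
    (x : Y.X n) : WbarObj G n :=
  fun j => τ j.val (d0iter Y (n - 1 - j.val) (j.val + 1)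
    ((show Y.X n = Y.X (j.val + 1 + (n - 1 - j.val)) by
        have := j.isLt; congr 1; omega) ▸ x))

/-!
A simplex `w ∈ W̄G_{n+1}` is determined by its top entry `τ̄ w` and its zeroth face `∂₀ w`, which
just drops that entry; and `f_τ(x)` has top entry `τ(x)` and zeroth face `f_τ(∂₀x)`. So `f_τ`
commutes with `∂_{k+1}` and `s_{k+1}` by induction on the dimension: on top entries this is the
twisting identity for `τ` matched with the same identity for `τ̄`, and on zeroth faces it drops
one dimension through `∂₀∂_{k+1} = ∂_k∂₀` and `∂₀s_{k+1} = s_k∂₀`, valid in `X` and in `W̄G`.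
Once `f_τ` is simplicial, `(g, x) ↦ ((g, f_τ x), x)` is a levelwise bijection onto the fibre
product commuting with the structure maps; it respects the twisted `∂₀` because `τ̄ ∘ f_τ = τ`.
-/

section Wbar

variable {G : SimplicialGroup} {n k : ℕ}

lemma Wd_apply_of_lt (w : WbarObj G (n+1)) (j : Fin n) (h : j + k < n) :
    Wd G n k w j = w j.castSucc :=
  dif_pos h

lemma Wd_apply_of_eq (w : WbarObj G (n+1)) (j : Fin n) (h : j + k = n) :
    Wd G n k w j = G.d j 0 (w j.succ) * w ⟨j, by omega⟩ :=
  (dif_neg (by omega)).trans (dif_pos h)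

lemma Wd_apply_of_gt (w : WbarObj G (n+1)) (j : Fin n) (h : n < j + k) :
    Wd G n k w j = G.d j (j + k - n) (w j.succ) :=
  (dif_neg (by omega)).trans (dif_neg (by omega))

lemma Ws_apply_of_lt (w : WbarObj G n) (j : Fin (n+1)) (h : j + k < n) :
    Ws G n k w j = w ⟨j, by omega⟩ :=
  dif_pos h

lemma Ws_apply_of_eq (w : WbarObj G n) (j : Fin (n+1)) (h : j + k = n) :
    Ws G n k w j = 1 :=
  (dif_neg (by omega)).trans (dif_pos h)

lemma Ws_succ_apply_of_gt (w : WbarObj G n) (j : Fin n) (h : n < j + 1 + k) :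
    Ws G n k w j.succ = G.s j (j + k - n) (w j) := by
  obtain ⟨j, hj⟩ := j
  dsimp only at h
  simp only [Ws, Fin.succ_mk]
  rw [dif_neg (by omega), dif_neg (by omega)]
  show (if h : j < n then G.s j (j + 1 + k - n - 1) (w ⟨j, h⟩) else 1) = _
  rw [dif_pos hj, show j + 1 + k - n - 1 = j + k - n by omega]

lemma Wd_zero_Wd_succ (w : WbarObj G (n+2)) :
    Wd G n 0 (Wd G (n+1) (k+1) w) = Wd G n k (Wd G (n+1) 0 w) := by
  funext j
  rw [Wd_apply_of_lt _ _ (by omega)]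
  rcases lt_trichotomy (j + k : ℕ) n with h | h | h
  · rw [Wd_apply_of_lt _ _ (by grind), Wd_apply_of_lt _ _ h,
      Wd_apply_of_lt _ _ (by grind)]
  · rw [Wd_apply_of_eq _ _ (by grind), Wd_apply_of_eq _ _ h,
      Wd_apply_of_lt _ _ (by grind), Wd_apply_of_lt _ _ (by grind)]
    rfl
  · rw [Wd_apply_of_gt _ _ (by grind), Wd_apply_of_gt _ _ h,
      Wd_apply_of_lt _ _ (by grind)]
    simp only [Fin.val_castSucc, Fin.succ_castSucc]
    congr 2
    omega

lemma Wd_zero_Ws_zero (w : WbarObj G n) : Wd G n 0 (Ws G n 0 w) = w := by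
  funext j
  rw [Wd_apply_of_lt _ _ (by omega), Ws_apply_of_lt _ _ (by simp)]
  rfl

lemma Wd_zero_Ws_succ (hk : k ≤ n) (w : WbarObj G (n+1)) :
    Wd G (n+1) 0 (Ws G (n+1) (k+1) w) = Ws G n k (Wd G n 0 w) := by
  funext j
  rw [Wd_apply_of_lt _ _ (by omega)]
  rcases lt_trichotomy (j + k : ℕ) n with h | h | h
  · rw [Ws_apply_of_lt _ _ (by grind), Ws_apply_of_lt _ _ h,
      Wd_apply_of_lt _ _ (by grind)]
    rfl
  · rw [Ws_apply_of_eq _ _ (by grind), Ws_apply_of_eq _ _ h]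
  · induction j using Fin.cases with
    | zero => exact absurd h (by simp [hk])
    | succ i =>
    show Ws G (n+1) (k+1) w i.castSucc.succ = _
    rw [Ws_succ_apply_of_gt _ _ (by grind),
      Ws_succ_apply_of_gt _ _ (by simpa using h), Wd_apply_of_lt _ _ (by omega)]
    simp only [Fin.val_castSucc]
    congr 2
    omega

theorem isTwistingData_Wtau : IsTwistingData G (WbarObj G) (Wd G) (Ws G) (Wtau G) := by
  refine ⟨fun n w => ?_, fun n i _ w => ?_, fun n i hi w => ?_, fun n w => ?_⟩
  · simp [Wd, Wtau]
  · simp [Wd, Wtau, show n + (i + 2) - (n + 1) = i + 1 by omega]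
  · simp [Ws, Wtau, show ¬ n + 1 + (i + 1) ≤ n by omega]
  · simp [Ws, Wtau]

lemma WbarObj.ext_Wtau_Wd_zero {v w : WbarObj G (n+1)} (htop : Wtau G n v = Wtau G n w)
    (hface : Wd G n 0 v = Wd G n 0 w) : v = w := by
  funext j
  refine Fin.lastCases htop (fun i => ?_) j
  have := congrFun hface i
  rwa [Wd_apply_of_lt _ _ (by simp), Wd_apply_of_lt _ _ (by simp)] at this

end Wbar

section FTau

variable {G : SimplicialGroup} {Y : SSet'} {τ : ∀ n, Y.X (n+1) → G.G n}

-- The index equations are hypotheses so that these apply to the unnormalised arithmetic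
-- `n - 1 - j` in `fTau`; after `subst` the transports become definitional.
lemma d0iter_cast_of_eq_zero {a r : ℕ} (hr : r = 0) (h : Y.X a = Y.X (a + r)) (x : Y.X a) :
    d0iter Y r a (h ▸ x) = x := by
  subst hr; rfl

lemma d0iter_cast_succ {a r r' n : ℕ} (hr : r' = r + 1) (hn : n = a + r)
    (h : Y.X (n+1) = Y.X (a + r')) (h' : Y.X n = Y.X (a + r)) (x : Y.X (n+1)) :
    d0iter Y r' a (h ▸ x) = d0iter Y r a (h' ▸ Y.d n 0 x) := by
  subst hr hn; rfl

lemma Wtau_fTau (n : ℕ) (x : Y.X (n+1)) : Wtau G n (fTau G Y τ (n+1) x) = τ n x :=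
  congrArg (τ n) (d0iter_cast_of_eq_zero (by simp) _ x)

lemma Wd_zero_fTau (n : ℕ) (x : Y.X (n+1)) :
    Wd G n 0 (fTau G Y τ (n+1) x) = fTau G Y τ n (Y.d n 0 x) := by
  funext j
  rw [Wd_apply_of_lt _ _ (by omega)]
  exact congrArg (τ j) (d0iter_cast_succ (by simp; omega) (by simp; omega) _ _ x)

variable (hτ : IsTwistingData G Y.X Y.d Y.s τ)
include hτ

theorem Wd_fTau (n k : ℕ) (hk : k ≤ n + 1) (x : Y.X (n+1)) :
    Wd G n k (fTau G Y τ (n+1) x) = fTau G Y τ n (Y.d n k x) := by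
  induction n generalizing k with
  | zero => exact funext fun j => j.elim0
  | succ m ih =>
    obtain _ | k := k
    · exact Wd_zero_fTau _ x
    refine WbarObj.ext_Wtau_Wd_zero ?_ ?_
    · obtain _ | k := k
      · calc Wtau G m (Wd G (m+1) 1 (fTau G Y τ (m+2) x))
            = G.d m 0 (τ (m+1) x) * τ m (Y.d (m+1) 0 x) := by
              rw [← isTwistingData_Wtau.1, Wtau_fTau, Wd_zero_fTau, Wtau_fTau]
          _ = Wtau G m (fTau G Y τ (m+1) (Y.d (m+1) 1 x)) := by rw [hτ.1, Wtau_fTau]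
      · rw [← isTwistingData_Wtau.2.1 m k (by omega), Wtau_fTau, hτ.2.1 m k (by omega),
          Wtau_fTau]
    · rw [Wd_zero_Wd_succ, Wd_zero_fTau, ih k (by omega), Wd_zero_fTau,
        Y.dd m 0 k (by omega) (by omega)]

lemma Ws_zero_fTau (n : ℕ) (x : Y.X n) :
    Ws G n 0 (fTau G Y τ n x) = fTau G Y τ (n+1) (Y.s n 0 x) :=
  WbarObj.ext_Wtau_Wd_zero
    (by rw [isTwistingData_Wtau.2.2.2, Wtau_fTau, hτ.2.2.2])
    (by rw [Wd_zero_Ws_zero, Wd_zero_fTau, Y.ds_self n 0 (Nat.zero_le n)])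

theorem Ws_fTau (n k : ℕ) (hk : k ≤ n) (x : Y.X n) :
    Ws G n k (fTau G Y τ n x) = fTau G Y τ (n+1) (Y.s n k x) := by
  induction n generalizing k with
  | zero => exact Nat.le_zero.1 hk ▸ Ws_zero_fTau hτ 0 x
  | succ m ih =>
    obtain _ | k := k
    · exact Ws_zero_fTau hτ _ x
    refine WbarObj.ext_Wtau_Wd_zero ?_ ?_
    · rw [← isTwistingData_Wtau.2.2.1 m k (by omega), Wtau_fTau, hτ.2.2.1 m k (by omega),
        Wtau_fTau]
    · rw [Wd_zero_Ws_succ (by omega), Wd_zero_fTau, ih k (by omega), Wd_zero_fTau,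
        Y.ds_lt m 0 k (by omega) (by omega)]

end FTau

/-- the twisted Cartesian product `G ×_τ X` is the pullback of the
universal bundle `WG = G ×_τ̄ W̄G` along `f_τ`: the map `Φ : (g,x) ↦ ((g, f_τ(x)), x)`
is a (levelwise) bijection of `G ×_τ X` onto the fiber product
`{(w,x) ∈ WG_n × X_n : π(w) = f_τ(x)}`, it commutes with the face and degeneracy maps
(the fiber product carrying the componentwise structure maps of `WG × X`), and it is
compatible with the principal `G`-actions and the projections to `X`. -/
theorem twisted_product_is_pullback_of_universal (G : SimplicialGroup) (Y : SSet')
    (τ : ∀ n, Y.X (n+1) → G.G n) (hτ : IsTwistingData G Y.X Y.d Y.s τ) :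
    let Φ : ∀ n, G.G n × Y.X n → (G.G n × WbarObj G n) × Y.X n :=
      fun n p => ((p.1, fTau G Y τ n p.2), p.2)
    (∀ n, Set.BijOn (Φ n) Set.univ
        {q : (G.G n × WbarObj G n) × Y.X n | q.1.2 = fTau G Y τ n q.2}) ∧
    (∀ (n k : ℕ), k ≤ n + 1 → ∀ p : G.G (n+1) × Y.X (n+1),
        Φ n (TPd G Y.X Y.d τ n k p) =
          (TPd G (WbarObj G) (Wd G) (Wtau G) n k (Φ (n+1) p).1, Y.d n k p.2)) ∧
    (∀ (n k : ℕ), k ≤ n → ∀ p : G.G n × Y.X n,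
        Φ (n+1) (TPs G Y.X Y.s n k p) =
          (TPs G (WbarObj G) (Ws G) n k (Φ n p).1, Y.s n k p.2)) ∧
    (∀ (n : ℕ) (g' : G.G n) (p : G.G n × Y.X n),
        Φ n (g' * p.1, p.2) = ((g' * (Φ n p).1.1, (Φ n p).1.2), (Φ n p).2)) ∧
    (∀ (n : ℕ) (p : G.G n × Y.X n), (Φ n p).2 = p.2) := by
  intro Φ
  refine ⟨fun n => ⟨fun _ _ => rfl, ?_, ?_⟩, fun n k hk p => ?_, fun n k hk p => ?_,
    fun _ _ _ => rfl, fun _ _ => rfl⟩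
  · exact fun p _ q _ h => Prod.ext (congrArg (·.1.1) h) (congrArg (·.2) h)
  · rintro ⟨⟨g, w⟩, x⟩ (hw : w = fTau G Y τ n x)
    exact ⟨(g, x), trivial, hw ▸ rfl⟩
  · obtain _ | k := k
    · simp only [Φ, TPd, Wtau_fTau, Wd_zero_fTau]
    · simp only [Φ, TPd, Wd_fTau hτ n (k+1) hk]
  · simp only [Φ, TPs, Ws_fTau hτ n k hk]
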